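/- Let Y^T and Y^F be disjoint finite sets of output species for a gate i, let x^T and x^F be fresh input species, and consider the CRN with (2,0) rules y + x^F → ∅ for every y ∈ Y^T and y + x^T → ∅ for every y ∈ Y^F. Let C be a configuration containing p ≥ 1 copies in total of species of Y^T and zero copies of species of Y^F (and no other species reacting with x^T or x^F). Then every terminal configuration reachable from C plus one copy of x^T and one copy of x^F contains exactly one copy of x^T and zero copies of x^F. Symmetrically, if C contains p ≥ 1 total copies of species of Y^F and zero copies of species of Y^T, every such terminal configuration contains exactly one copy of x^F and zero copies of x^T. Hence one step suffices to convert a gate's output representation into a correct single-copy input representation for the next depth level. -/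
import Mathlib


/-! ### Chemical Reaction Networks (CRNs) and step CRNs -/

/-- A reaction rule: an ordered pair of multisets (reactants, products). -/
structure Rule (Λ : Type) where
  reactants : Multiset Λ
  products : Multiset Λ
deriving DecidableEq

namespace Rule

/-- A `(2,0)` void rule: exactly two reactants and no products. -/
def IsVoid20 {Λ : Type} (R : Rule Λ) : Prop :=
  Multiset.card R.reactants = 2 ∧ R.products = 0

/-- A `(2,1)` catalytic rule: two reactants, one product which is one of the reactants. -/
def IsCat21 {Λ : Type} (R : Rule Λ) : Prop :=
  Multiset.card R.reactants = 2 ∧ Multiset.card R.products = 1 ∧ R.products ≤ R.reactants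

/-- A void rule: the products form a strict submultiset of the reactants. -/
def IsVoid {Λ : Type} (R : Rule Λ) : Prop := R.products < R.reactants

end Rule

/-- A single rule application: some rule of `Γ` is applicable to `C` and transforms it to `C'`. -/
def RStep {Λ : Type} [DecidableEq Λ] (Γ : Finset (Rule Λ)) (C C' : Multiset Λ) : Prop :=
  ∃ R ∈ Γ, R.reactants ≤ C ∧ C' = C - R.reactants + R.products

/-- Reachability: the reflexive-transitive closure of single rule application. -/
def Reaches {Λ : Type} [DecidableEq Λ] (Γ : Finset (Rule Λ)) : Multiset Λ → Multiset Λ → Prop :=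
  Relation.ReflTransGen (RStep Γ)

/-- A configuration is terminal if no rule of `Γ` is applicable to it. -/
def Terminal {Λ : Type} (Γ : Finset (Rule Λ)) (C : Multiset Λ) : Prop :=
  ∀ R ∈ Γ, ¬ R.reactants ≤ C

/-- The set of terminal configurations reachable from `S` after adding `s` (one step). -/
def stepTerm {Λ : Type} [DecidableEq Λ] (Γ : Finset (Rule Λ)) (S : Set (Multiset Λ)) (s : Multiset Λ) :
    Set (Multiset Λ) :=
  {T | ∃ c ∈ S, Reaches Γ (c + s) T ∧ Terminal Γ T}

/-- `TERM_k`: terminal configurations after running the step CRN with step sequence `ss`. -/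
def termAfter {Λ : Type} [DecidableEq Λ] (Γ : Finset (Rule Λ)) (ss : List (Multiset Λ)) : Set (Multiset Λ) :=
  ss.foldl (stepTerm Γ) {0}

/-- All configurations reachable during any step, starting from terminal sets `S`. -/
def reachDuring {Λ : Type} [DecidableEq Λ] (Γ : Finset (Rule Λ)) :
    Set (Multiset Λ) → List (Multiset Λ) → Set (Multiset Λ)
  | _, [] => ∅
  | S, s :: rest =>
      {C | ∃ c ∈ S, Reaches Γ (c + s) C} ∪ reachDuring Γ (stepTerm Γ S s) rest

/-- All configurations reachable at any step of the step CRN `(Γ, ss)`. -/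
def reachAll {Λ : Type} [DecidableEq Λ] (Γ : Finset (Rule Λ)) (ss : List (Multiset Λ)) : Set (Multiset Λ) :=
  reachDuring Γ {0} ss

/-- Add the input configuration `X` to the first step of the step sequence. -/
def addToHead {Λ : Type} (X : Multiset Λ) : List (Multiset Λ) → List (Multiset Λ)
  | [] => [X]
  | s :: rest => (X + s) :: rest

/-- The rules of the output-to-input conversion gadget: `y + x^F → ∅` for `y ∈ Y^T` and
`y + x^T → ∅` for `y ∈ Y^F`. -/
def convRules {Λ : Type} [DecidableEq Λ] (YT YF : Finset Λ) (xT xF : Λ) : Finset (Rule Λ) :=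
  (YT.image fun y => (⟨{y, xF}, 0⟩ : Rule Λ)) ∪ (YF.image fun y => (⟨{y, xT}, 0⟩ : Rule Λ))

lemma conv_symm {Λ : Type} [DecidableEq Λ] (YT YF : Finset Λ) (xT xF : Λ) :
    convRules YF YT xF xT = convRules YT YF xT xF := by
  simp [convRules, Finset.union_comm]

lemma count_pair {Λ : Type} [DecidableEq Λ] (a y x : Λ) :
    Multiset.count a ({y, x} : Multiset Λ)
      = (if a = y then 1 else 0) + (if a = x then 1 else 0) := by
  rw [show ({y, x} : Multiset Λ) = y ::ₘ {x} from rfl, Multiset.count_cons,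
    Multiset.count_singleton]
  omega

lemma aux14 {Λ : Type} [DecidableEq Λ] (YT YF : Finset Λ) (xT xF : Λ)
    (hdisj : Disjoint YT YF) (hxT : xT ∉ YT ∪ YF) (hxF : xF ∉ YT ∪ YF) (hxx : xT ≠ xF)
    (C : Multiset Λ) (hCxT : C.count xT = 0) (hCxF : C.count xF = 0)
    (hp : 1 ≤ ∑ y ∈ YT, C.count y) (hYF : ∀ y ∈ YF, C.count y = 0) :
    ∀ T : Multiset Λ,
      Reaches (convRules YT YF xT xF) (C + {xT} + {xF}) T →
      Terminal (convRules YT YF xT xF) T →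
      T.count xT = 1 ∧ T.count xF = 0 := by
  have hxTT : xT ∉ YT := fun h => hxT (Finset.mem_union_left _ h)
  have hxTF : xT ∉ YF := fun h => hxT (Finset.mem_union_right _ h)
  have hxFT : xF ∉ YT := fun h => hxF (Finset.mem_union_left _ h)
  have hxFF : xF ∉ YF := fun h => hxF (Finset.mem_union_right _ h)
  set Inv : Multiset Λ → Prop := fun D =>
    D.count xT = 1 ∧ (∀ y ∈ YF, D.count y = 0) ∧ D.count xF ≤ ∑ y ∈ YT, D.count y with hInvDef
  have hinit : Inv (C + {xT} + {xF}) := by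
    have hc : ∀ a : Λ, (C + {xT} + {xF}).count a
        = C.count a + (if a = xT then 1 else 0) + (if a = xF then 1 else 0) := by
      intro a
      simp [Multiset.count_add, Multiset.count_singleton]
    refine ⟨?_, ?_, ?_⟩
    · rw [hc]; simp [hCxT, hxx]
    · intro y hy
      have h1 : y ≠ xT := fun h => hxTF (h ▸ hy)
      have h2 : y ≠ xF := fun h => hxFF (h ▸ hy)
      rw [hc]; simp [hYF y hy, h1, h2]
    · have hs : ∀ y ∈ YT, (C + {xT} + {xF}).count y = C.count y := by
        intro y hy
        have h1 : y ≠ xT := fun h => hxTT (h ▸ hy)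
        have h2 : y ≠ xF := fun h => hxFT (h ▸ hy)
        rw [hc]; simp [h1, h2]
      rw [Finset.sum_congr rfl hs, hc]
      simp [hCxF, hxx.symm]
      omega
  have hstep : ∀ D D', Inv D → RStep (convRules YT YF xT xF) D D' → Inv D' := by
    rintro D D' ⟨h1, h2, h3⟩ ⟨R, hR, hle, rfl⟩
    rw [convRules, Finset.mem_union] at hR
    rcases hR with hR | hR
    · obtain ⟨y, hy, rfl⟩ := Finset.mem_image.mp hR
      simp only at hle ⊢
      have hyT : y ≠ xT := fun h => hxTT (h ▸ hy)
      have hyF : y ≠ xF := fun h => hxFT (h ▸ hy)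
      have hcle : ∀ a, Multiset.count a ({y, xF} : Multiset Λ) ≤ D.count a :=
        fun a => Multiset.le_iff_count.mp hle a
      have hDa : ∀ a, (D - ({y, xF} : Multiset Λ) + (0 : Multiset Λ)).count a
          = D.count a - Multiset.count a ({y, xF} : Multiset Λ) := by
        intro a
        rw [Multiset.count_add, Multiset.count_sub]
        simp
      have eT : Multiset.count xT ({y, xF} : Multiset Λ) = 0 := by
        rw [count_pair]; simp [Ne.symm hyT, hxx]
      have eF : Multiset.count xF ({y, xF} : Multiset Λ) = 1 := by
        rw [count_pair]; simp [Ne.symm hyF]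
      have hFge : 1 ≤ D.count xF := eF ▸ hcle xF
      have hsum : ∑ z ∈ YT, (D - ({y, xF} : Multiset Λ) + (0 : Multiset Λ)).count z
          = (∑ z ∈ YT, D.count z) - 1 := by
        rw [Finset.sum_congr rfl (fun z _ => hDa z),
          Finset.sum_tsub_distrib _ (fun z _ => hcle z)]
        congr 1
        have hz : ∀ z ∈ YT, Multiset.count z ({y, xF} : Multiset Λ)
            = if z = y then 1 else 0 := by
          intro z hzT
          have : z ≠ xF := fun h => hxFT (h ▸ hzT)
          rw [count_pair]; simp [this]
        rw [Finset.sum_congr rfl hz, Finset.sum_ite_eq' YT y (fun _ => 1), if_pos hy]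
      refine ⟨?_, ?_, ?_⟩
      · rw [hDa, eT, h1]
      · intro z hz
        have hz1 : z ≠ y := fun h => hdisj.forall_ne_finset hy (h ▸ hz) rfl
        have hz2 : z ≠ xF := fun h => hxFF (h ▸ hz)
        have e0 : Multiset.count z ({y, xF} : Multiset Λ) = 0 := by
          rw [count_pair]; simp [hz1, hz2]
        rw [hDa, e0, h2 z hz]
      · rw [hDa, eF, hsum]
        omega
    · obtain ⟨y, hy, rfl⟩ := Finset.mem_image.mp hR
      exfalso
      have hc1 : Multiset.count y ({y, xT} : Multiset Λ) ≤ D.count y :=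
        Multiset.le_iff_count.mp hle y
      have hc2 : 1 ≤ Multiset.count y ({y, xT} : Multiset Λ) := by
        rw [count_pair]; simp
      have hc3 := h2 y hy
      omega
  have hreach : ∀ T, Reaches (convRules YT YF xT xF) (C + {xT} + {xF}) T → Inv T := by
    intro T h
    induction h with
    | refl => exact hinit
    | tail _ hstep' ih => exact hstep _ _ ih hstep'
  intro T hT hterm
  obtain ⟨h1, h2, h3⟩ := hreach T hT
  refine ⟨h1, ?_⟩
  by_contra h
  have hge : 1 ≤ T.count xF := Nat.one_le_iff_ne_zero.mpr h
  have hsum1 : 1 ≤ ∑ y ∈ YT, T.count y := le_trans hge h3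
  obtain ⟨y, hy, hyc⟩ : ∃ y ∈ YT, 1 ≤ T.count y := by
    by_contra hc
    push_neg at hc
    have hz : ∀ y ∈ YT, T.count y = 0 := fun y hy => by have := hc y hy; omega
    rw [Finset.sum_congr rfl hz, Finset.sum_const, smul_zero] at hsum1
    omega
  have hyF : y ≠ xF := fun h => hxFT (h ▸ hy)
  have hmem : (⟨{y, xF}, 0⟩ : Rule Λ) ∈ convRules YT YF xT xF :=
    Finset.mem_union_left _ (Finset.mem_image.mpr ⟨y, hy, rfl⟩)
  have hle : ({y, xF} : Multiset Λ) ≤ T := by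
    rw [Multiset.le_iff_count]
    intro a
    rw [count_pair]
    by_cases ha : a = y
    · subst ha
      simp [hyF]
      omega
    · by_cases ha2 : a = xF
      · subst ha2
        simp [Ne.symm hyF]
        omega
      · simp [ha, ha2]
  exact hterm _ hmem hle

/-- The conversion gadget: with disjoint output-species sets `Y^T, Y^F` of a
gate and fresh input species `x^T, x^F`, from `C` plus one copy each of `x^T` and `x^F`:
if `C` holds `p ≥ 1` total copies of `Y^T`-species and none of `Y^F`, every reachable terminal
configuration has exactly one `x^T` and no `x^F`; symmetrically if `C` holds `p ≥ 1` total
copies of `Y^F`-species and none of `Y^T`, it has exactly one `x^F` and no `x^T`. -/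
theorem stmt14 {Λ : Type} [DecidableEq Λ] (YT YF : Finset Λ) (xT xF : Λ)
    (hdisj : Disjoint YT YF) (hxT : xT ∉ YT ∪ YF) (hxF : xF ∉ YT ∪ YF) (hxx : xT ≠ xF)
    (C : Multiset Λ) (hCxT : C.count xT = 0) (hCxF : C.count xF = 0) :
    ((1 ≤ ∑ y ∈ YT, C.count y) → (∀ y ∈ YF, C.count y = 0) →
      ∀ T : Multiset Λ,
        Reaches (convRules YT YF xT xF) (C + {xT} + {xF}) T →
        Terminal (convRules YT YF xT xF) T →
        T.count xT = 1 ∧ T.count xF = 0) ∧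
    ((1 ≤ ∑ y ∈ YF, C.count y) → (∀ y ∈ YT, C.count y = 0) →
      ∀ T : Multiset Λ,
        Reaches (convRules YT YF xT xF) (C + {xT} + {xF}) T →
        Terminal (convRules YT YF xT xF) T →
        T.count xF = 1 ∧ T.count xT = 0) := by
  constructor
  · exact fun hp hYF => aux14 YT YF xT xF hdisj hxT hxF hxx C hCxT hCxF hp hYF
  · intro hp hYT T hT hterm
    have hu1 : xF ∉ YF ∪ YT := by rwa [Finset.union_comm]
    have hu2 : xT ∉ YF ∪ YT := by rwa [Finset.union_comm]
    have hcfg : C + {xF} + {xT} = C + {xT} + {xF} := by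
      rw [add_assoc, add_assoc, add_comm ({xF} : Multiset Λ)]
    refine aux14 YF YT xF xT hdisj.symm hu1 hu2 hxx.symm C hCxF hCxT hp hYT T ?_ ?_
    · rw [conv_symm, hcfg]; exact hT
    · rw [conv_symm]; exact hterm
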